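/- arXiv:2408.00053 — 9 statements merged into one kernel-verified Lean document; each statement's English description precedes it below -/
import Mathlib

section
/- Let c>0 and v, G11, G12 be real numbers. If √(G11²+G12²) < v < √(2c² + G11²+G12²), then X₁² := √(c⁴ + 4(G11²+G12²+c²)v²) - v² - G11² - G12² - c² is strictly positive. -/
/-- In the instability window `√(G11²+G12²) < v < √(2c²+G11²+G12²)`, the larger root
`X₁²` of the characteristic quadratic is strictly positive. -/
theorem stmt_1 (c v G11 G12 : ℝ) (hc : 0 < c)
    (h1 : Real.sqrt (G11 ^ 2 + G12 ^ 2) < v)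
    (h2 : v < Real.sqrt (2 * c ^ 2 + G11 ^ 2 + G12 ^ 2)) :
    0 < Real.sqrt (c ^ 4 + 4 * (G11 ^ 2 + G12 ^ 2 + c ^ 2) * v ^ 2)
        - v ^ 2 - G11 ^ 2 - G12 ^ 2 - c ^ 2 := by
  have hv : 0 < v := lt_of_le_of_lt (Real.sqrt_nonneg _) h1
  have hg : G11 ^ 2 + G12 ^ 2 < v ^ 2 := by
    have := (Real.sqrt_lt' hv).mp h1
    linarith
  have hu : v ^ 2 < 2 * c ^ 2 + G11 ^ 2 + G12 ^ 2 :=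
    (Real.lt_sqrt hv.le).mp h2
  have key : v ^ 2 + G11 ^ 2 + G12 ^ 2 + c ^ 2
      < Real.sqrt (c ^ 4 + 4 * (G11 ^ 2 + G12 ^ 2 + c ^ 2) * v ^ 2) := by
    have hs : Real.sqrt (c ^ 4 + 4 * (G11 ^ 2 + G12 ^ 2 + c ^ 2) * v ^ 2) ^ 2
        = c ^ 4 + 4 * (G11 ^ 2 + G12 ^ 2 + c ^ 2) * v ^ 2 :=
      Real.sq_sqrt (by positivity)
    nlinarith [Real.sqrt_nonneg (c ^ 4 + 4 * (G11 ^ 2 + G12 ^ 2 + c ^ 2) * v ^ 2),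
      sq_nonneg (v ^ 2 - G11 ^ 2 - G12 ^ 2 - c ^ 2), hc.le, sq_nonneg c]
  linarith
end

section
/- Let c>0 and v, G11, G12 be real numbers. If v > √(2c² + G11²+G12²) or 0 ≤ v < √(G11²+G12²), then X₁² := √(c⁴ + 4(G11²+G12²+c²)v²) - v² - G11² - G12² - c² is negative (in the first case) respectively negative (in the second case), i.e., X₁² < 0 whenever v ∉ [√(G11²+G12²), √(2c²+G11²+G12²)]. -/
/-- Outside the window `[√(G11²+G12²), √(2c²+G11²+G12²)]`, the root `X₁²` is negative. -/
theorem stmt_2 (c v G11 G12 : ℝ) (hc : 0 < c)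
    (h : v > Real.sqrt (2 * c ^ 2 + G11 ^ 2 + G12 ^ 2) ∨
      (0 ≤ v ∧ v < Real.sqrt (G11 ^ 2 + G12 ^ 2))) :
    Real.sqrt (c ^ 4 + 4 * (G11 ^ 2 + G12 ^ 2 + c ^ 2) * v ^ 2)
        - v ^ 2 - G11 ^ 2 - G12 ^ 2 - c ^ 2 < 0 := by
  have hB : 0 < v ^ 2 + G11 ^ 2 + G12 ^ 2 + c ^ 2 := by positivity
  have key : c ^ 4 + 4 * (G11 ^ 2 + G12 ^ 2 + c ^ 2) * v ^ 2
      < (v ^ 2 + G11 ^ 2 + G12 ^ 2 + c ^ 2) ^ 2 := by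
    rcases h with h | ⟨hv0, hv⟩
    · have hv0 : 0 < v := lt_of_le_of_lt (Real.sqrt_nonneg _) h
      have h2 : 2 * c ^ 2 + G11 ^ 2 + G12 ^ 2 < v ^ 2 := (Real.sqrt_lt' hv0).mp h
      nlinarith [sq_nonneg (v ^ 2 - G11 ^ 2 - G12 ^ 2 - 2 * c ^ 2)]
    · have h2 : v ^ 2 < G11 ^ 2 + G12 ^ 2 := (Real.lt_sqrt hv0).mp hv
      nlinarith [sq_nonneg c, sq_nonneg (G11 ^ 2 + G12 ^ 2 - v ^ 2)]
  have := (Real.sqrt_lt' hB).mpr key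
  linarith
end

section
/- Let c>0, K ≥ 0, ε₀ > 0 with K+ε₀ ≤ √(K²+2)−ε₀. For M with K+ε₀ ≤ M ≤ √(K²+2)−ε₀, define a = √(1+4(K²+1)M²) − 2M². Then −1 < a ≤ √(1+4(K²+1)(K+ε₀)²) − 2(K+ε₀)². -/
/-- Two-sided bound on `a = √(1+4(K²+1)M²) − 2M²` over the Mach number window
`K+ε₀ ≤ M ≤ √(K²+2)−ε₀`. -/
theorem stmt_6 (c K ε₀ M : ℝ) (hc : 0 < c) (hK : 0 ≤ K) (hε : 0 < ε₀)
    (hwin : K + ε₀ ≤ Real.sqrt (K ^ 2 + 2) - ε₀)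
    (hM1 : K + ε₀ ≤ M) (hM2 : M ≤ Real.sqrt (K ^ 2 + 2) - ε₀) :
    -1 < Real.sqrt (1 + 4 * (K ^ 2 + 1) * M ^ 2) - 2 * M ^ 2 ∧
    Real.sqrt (1 + 4 * (K ^ 2 + 1) * M ^ 2) - 2 * M ^ 2 ≤
      Real.sqrt (1 + 4 * (K ^ 2 + 1) * (K + ε₀) ^ 2) - 2 * (K + ε₀) ^ 2 := by
  set x := K + ε₀ with hx
  have hx0 : 0 < x := by positivity
  have hM0 : 0 < M := lt_of_lt_of_le hx0 hM1
  have hxM : x ^ 2 ≤ M ^ 2 := by nlinarith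
  have hMlt : M < Real.sqrt (K ^ 2 + 2) := by linarith
  have hMsq : M ^ 2 < K ^ 2 + 2 := by
    have h := Real.sq_sqrt (by positivity : (0:ℝ) ≤ K ^ 2 + 2)
    nlinarith [Real.sqrt_nonneg (K ^ 2 + 2)]
  constructor
  · -- lower bound
    have h1 : 2 * M ^ 2 - 1 < Real.sqrt (1 + 4 * (K ^ 2 + 1) * M ^ 2) := by
      rcases lt_or_ge (2 * M ^ 2 - 1) 0 with h | h
      · exact lt_of_lt_of_le h (Real.sqrt_nonneg _)
      · rw [Real.lt_sqrt h]
        nlinarith [mul_lt_mul_of_pos_left hMsq (show (0:ℝ) < 4 * M ^ 2 by positivity)]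
    linarith
  · -- upper bound
    have hv : (0:ℝ) ≤ 1 + 4 * (K ^ 2 + 1) * x ^ 2 := by positivity
    have hb : K ^ 2 + 1 ≤ Real.sqrt (1 + 4 * (K ^ 2 + 1) * x ^ 2) := by
      rw [Real.le_sqrt (by positivity) hv]
      have hxK : K ^ 2 ≤ x ^ 2 := by nlinarith
      nlinarith [mul_le_mul_of_nonneg_left hxK (show (0:ℝ) ≤ 4 * (K ^ 2 + 1) by positivity), sq_nonneg K]
    have hvs : Real.sqrt (1 + 4 * (K ^ 2 + 1) * x ^ 2) ^ 2
        = 1 + 4 * (K ^ 2 + 1) * x ^ 2 := Real.sq_sqrt hv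
    set B := Real.sqrt (1 + 4 * (K ^ 2 + 1) * x ^ 2) + 2 * (M ^ 2 - x ^ 2) with hB
    have hBnn : 0 ≤ B := by
      have := Real.sqrt_nonneg (1 + 4 * (K ^ 2 + 1) * x ^ 2)
      nlinarith
    have key : 1 + 4 * (K ^ 2 + 1) * M ^ 2 ≤ B ^ 2 := by
      have hs : 0 ≤ M ^ 2 - x ^ 2 := by linarith
      nlinarith [mul_nonneg hs (sub_nonneg.mpr hb), sq_nonneg (M ^ 2 - x ^ 2)]
    have : Real.sqrt (1 + 4 * (K ^ 2 + 1) * M ^ 2) ≤ B := by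
      calc Real.sqrt (1 + 4 * (K ^ 2 + 1) * M ^ 2) ≤ Real.sqrt (B ^ 2) :=
            Real.sqrt_le_sqrt key
        _ = B := Real.sqrt_sq hBnn
    linarith [this]
end

section
/- Let K ≥ 0 and ε₀ > 0 with K + ε₀ ≤ √(K²+2) − ε₀, and let M satisfy K+ε₀ ≤ M ≤ √(K²+2)−ε₀. Set a = √(1+4(K²+1)M²) − 2M² and r = 1 (normalizing η = 1). Then C₁ := 2 − 2(√(1+4(K²+1)(K+ε₀)²) − 2(K+ε₀)²) satisfies C₁ ≤ 2(r−a)/r < 4, and C₁ > 0. -/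
set_option maxHeartbeats 1000000 in
/-- With `a = √(1+4(K²+1)M²) − 2M²` and `r = 1`, the constant
`C₁ = 2 − 2(√(1+4(K²+1)(K+ε₀)²) − 2(K+ε₀)²)` satisfies
`0 < C₁`, `C₁ ≤ 2(r−a)/r` and `2(r−a)/r < 4`. -/
theorem stmt_7 (K ε₀ M : ℝ) (hK : 0 ≤ K) (hε : 0 < ε₀)
    (hwin : K + ε₀ ≤ Real.sqrt (K ^ 2 + 2) - ε₀)
    (hM1 : K + ε₀ ≤ M) (hM2 : M ≤ Real.sqrt (K ^ 2 + 2) - ε₀) :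
    (2 - 2 * (Real.sqrt (1 + 4 * (K ^ 2 + 1) * (K + ε₀) ^ 2) - 2 * (K + ε₀) ^ 2) ≤
        2 * (1 - (Real.sqrt (1 + 4 * (K ^ 2 + 1) * M ^ 2) - 2 * M ^ 2)) / 1) ∧
    (2 * (1 - (Real.sqrt (1 + 4 * (K ^ 2 + 1) * M ^ 2) - 2 * M ^ 2)) / 1 < 4) ∧
    (0 < 2 - 2 * (Real.sqrt (1 + 4 * (K ^ 2 + 1) * (K + ε₀) ^ 2) - 2 * (K + ε₀) ^ 2)) := by
  set s : ℝ := K + ε₀ with hs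
  clear_value s
  have hs0 : 0 < s := by rw [hs]; positivity
  have hM0 : 0 < M := lt_of_lt_of_le hs0 hM1
  have hc : (0:ℝ) < K ^ 2 + 1 := by positivity
  have hA0 : (0:ℝ) ≤ 1 + 4 * (K ^ 2 + 1) * M ^ 2 := by positivity
  have hB0 : (0:ℝ) ≤ 1 + 4 * (K ^ 2 + 1) * s ^ 2 := by positivity
  have hA := Real.sq_sqrt hA0
  have hB := Real.sq_sqrt hB0
  have hAnn := Real.sqrt_nonneg (1 + 4 * (K ^ 2 + 1) * M ^ 2)
  have hBnn := Real.sqrt_nonneg (1 + 4 * (K ^ 2 + 1) * s ^ 2)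
  -- √B ≥ K²+1
  have hsK2 : K ^ 2 < s ^ 2 := by nlinarith
  have hss : s ^ 2 ≤ M ^ 2 := by nlinarith
  have hBc : K ^ 2 + 1 ≤ Real.sqrt (1 + 4 * (K ^ 2 + 1) * s ^ 2) := by
    rw [Real.le_sqrt' hc]
    nlinarith [mul_le_mul_of_nonneg_left hsK2.le hc.le]
  have hAc : K ^ 2 + 1 ≤ Real.sqrt (1 + 4 * (K ^ 2 + 1) * M ^ 2) := by
    rw [Real.le_sqrt' hc]
    nlinarith [mul_le_mul_of_nonneg_left (hsK2.le.trans hss) hc.le]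
  have hAB : Real.sqrt (1 + 4 * (K ^ 2 + 1) * s ^ 2)
      ≤ Real.sqrt (1 + 4 * (K ^ 2 + 1) * M ^ 2) := by
    apply Real.sqrt_le_sqrt
    nlinarith [mul_le_mul_of_nonneg_left hss hc.le]
  have hM2' : M ^ 2 < K ^ 2 + 2 := by
    have h2 : (0:ℝ) ≤ K ^ 2 + 2 := by positivity
    have : M < Real.sqrt (K ^ 2 + 2) := lt_of_le_of_lt hM2 (by linarith)
    nlinarith [Real.sq_sqrt h2, Real.sqrt_nonneg (K ^ 2 + 2)]
  refine ⟨?_, ?_, ?_⟩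
  · -- monotonicity part
    have key : Real.sqrt (1 + 4 * (K ^ 2 + 1) * M ^ 2)
        - Real.sqrt (1 + 4 * (K ^ 2 + 1) * s ^ 2) ≤ 2 * (M ^ 2 - s ^ 2) := by
      nlinarith [mul_le_mul_of_nonneg_left (add_le_add hAc hBc)
        (sub_nonneg.2 hAB)]
    rw [div_one]
    linarith
  · -- upper bound < 4, i.e. 2M² − 1 < √A
    have h2 : 2 * M ^ 2 - 1 < Real.sqrt (1 + 4 * (K ^ 2 + 1) * M ^ 2) := by
      rcases le_or_gt (2 * M ^ 2 - 1) 0 with h | h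
      · linarith
      · rw [Real.lt_sqrt (by linarith)]
        nlinarith [sq_nonneg M]
    rw [div_one]
    linarith
  · -- positivity: √B < 1 + 2s²
    have h3 : Real.sqrt (1 + 4 * (K ^ 2 + 1) * s ^ 2) < 1 + 2 * s ^ 2 := by
      rw [Real.sqrt_lt' (by positivity)]
      nlinarith [mul_lt_mul_of_pos_right hsK2 (mul_pos hs0 hs0)]
    linarith
end

section
/- Let K ≥ 0 and ε₀ > 0 with K+ε₀ ≤ √(K²+2)−ε₀. For M with K+ε₀ ≤ M ≤ √(K²+2)−ε₀, define T(M) = 1/(√2 · √(√(1+4(K²+1)M²) + 1 − 2M²)). Then 1/2 < T(M) ≤ C₊, where C₊ = 1/(√2 · √(1 + √((2K²+3)² − 4(K²+1)ε₀(2√(K²+2)−ε₀)) − 2(√(K²+2)−ε₀)²)). -/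
set_option maxHeartbeats 1600000


/-- Bounds on `T(M) = |μ±/(μ⁺+μ⁻)|` over the Mach number window: `1/2 < T(M) ≤ C₊`. -/
theorem stmt_9 (K ε₀ M : ℝ) (hK : 0 ≤ K) (hε : 0 < ε₀)
    (hwin : K + ε₀ ≤ Real.sqrt (K ^ 2 + 2) - ε₀)
    (hM1 : K + ε₀ ≤ M) (hM2 : M ≤ Real.sqrt (K ^ 2 + 2) - ε₀) :
    1 / 2 < 1 / (Real.sqrt 2 *
        Real.sqrt (Real.sqrt (1 + 4 * (K ^ 2 + 1) * M ^ 2) + 1 - 2 * M ^ 2)) ∧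
    1 / (Real.sqrt 2 *
        Real.sqrt (Real.sqrt (1 + 4 * (K ^ 2 + 1) * M ^ 2) + 1 - 2 * M ^ 2)) ≤
      1 / (Real.sqrt 2 *
        Real.sqrt (1 + Real.sqrt ((2 * K ^ 2 + 3) ^ 2
            - 4 * (K ^ 2 + 1) * ε₀ * (2 * Real.sqrt (K ^ 2 + 2) - ε₀))
          - 2 * (Real.sqrt (K ^ 2 + 2) - ε₀) ^ 2)) := by
  have hc2 : (0:ℝ) ≤ K ^ 2 + 2 := by positivity
  set c := Real.sqrt (K ^ 2 + 2) with hc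
  have hcsq : c ^ 2 = K ^ 2 + 2 := Real.sq_sqrt hc2
  have hc0 : 0 ≤ c := Real.sqrt_nonneg _
  -- basic positivity facts
  have hMp_pos : 0 < c - ε₀ := lt_of_lt_of_le (by linarith) hwin
  have hM_pos : 0 < M := lt_of_lt_of_le (by linarith) hM1
  have hKM : K < M := by linarith
  have hxK : K ^ 2 < M ^ 2 := by nlinarith
  have hxy : M ^ 2 ≤ (c - ε₀) ^ 2 := by nlinarith
  have hyb : (c - ε₀) ^ 2 < K ^ 2 + 2 := by nlinarith
  have hy_pos : 0 < (c - ε₀) ^ 2 := by positivity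
  -- the argument of the sqrt in C₊ equals 1 + 4(K²+1)(c-ε₀)²
  have harg : (2 * K ^ 2 + 3) ^ 2 - 4 * (K ^ 2 + 1) * ε₀ * (2 * c - ε₀)
      = 1 + 4 * (K ^ 2 + 1) * (c - ε₀) ^ 2 := by
    linear_combination (-4 * (K ^ 2 + 1)) * hcsq
  rw [harg]
  set s := Real.sqrt (1 + 4 * (K ^ 2 + 1) * M ^ 2) with hsdef
  set t := Real.sqrt (1 + 4 * (K ^ 2 + 1) * (c - ε₀) ^ 2) with htdef
  have hs0 : 0 ≤ s := Real.sqrt_nonneg _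
  have ht0 : 0 ≤ t := Real.sqrt_nonneg _
  have hs2 : s ^ 2 = 1 + 4 * (K ^ 2 + 1) * M ^ 2 := Real.sq_sqrt (by positivity)
  have ht2 : t ^ 2 = 1 + 4 * (K ^ 2 + 1) * (c - ε₀) ^ 2 := Real.sq_sqrt (by positivity)
  -- lower bound on s : s ≥ 2K² + 1
  have hs_lb : 2 * K ^ 2 + 1 ≤ s := by
    nlinarith [hs0, hs2, hxK, sq_nonneg (s - (2 * K ^ 2 + 1)), sq_nonneg (s + 2 * K ^ 2 + 1)]
  -- g > 0
  have hg_pos : 0 < 1 + t - 2 * (c - ε₀) ^ 2 := by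
    nlinarith [ht0, ht2, hyb, hy_pos, sq_nonneg (t - (2 * (c - ε₀) ^ 2 - 1)),
      sq_nonneg (t + 2 * (c - ε₀) ^ 2 - 1)]
  -- monotonicity: g ≤ f
  have hfg : 1 + t - 2 * (c - ε₀) ^ 2 ≤ s + 1 - 2 * M ^ 2 := by
    set d := (c - ε₀) ^ 2 - M ^ 2 with hddef
    have hd : 0 ≤ d := sub_nonneg.mpr hxy
    have hbs : K ^ 2 + 1 ≤ s + d := by nlinarith
    have hprod : 0 ≤ d * (s + d - (K ^ 2 + 1)) := mul_nonneg hd (by linarith)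
    have h1 : 1 + 4 * (K ^ 2 + 1) * (c - ε₀) ^ 2 ≤ (s + 2 * d) ^ 2 := by
      nlinarith [hs2]
    have key : t ≤ s + 2 * d := by
      calc t ≤ Real.sqrt ((s + 2 * d) ^ 2) := Real.sqrt_le_sqrt h1
        _ = s + 2 * d := Real.sqrt_sq (by linarith)
    linarith
  have hf_pos : 0 < s + 1 - 2 * M ^ 2 := lt_of_lt_of_le hg_pos hfg
  -- f < 2
  have hf_lt2 : s + 1 - 2 * M ^ 2 < 2 := by
    have : s < 1 + 2 * M ^ 2 := by
      nlinarith [hs0, hs2, hxK, sq_nonneg (s - (1 + 2 * M ^ 2))]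
    linarith
  -- put it together
  have h2 : (0:ℝ) < Real.sqrt 2 := Real.sqrt_pos.mpr (by norm_num)
  have hsg : 0 < Real.sqrt (1 + t - 2 * (c - ε₀) ^ 2) := Real.sqrt_pos.mpr hg_pos
  have hsf : 0 < Real.sqrt (s + 1 - 2 * M ^ 2) := Real.sqrt_pos.mpr hf_pos
  constructor
  · -- 1/2 < 1/(√2 √f)
    have hd : Real.sqrt 2 * Real.sqrt (s + 1 - 2 * M ^ 2) < 2 := by
      rw [← Real.sqrt_mul (by norm_num)]
      have : (2:ℝ) * (s + 1 - 2 * M ^ 2) < 2 ^ 2 := by nlinarith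
      exact (Real.sqrt_lt' (by norm_num)).mpr this
    have hd0 : 0 < Real.sqrt 2 * Real.sqrt (s + 1 - 2 * M ^ 2) := mul_pos h2 hsf
    exact one_div_lt_one_div_of_lt hd0 hd
  · have hle : Real.sqrt 2 * Real.sqrt (1 + t - 2 * (c - ε₀) ^ 2)
        ≤ Real.sqrt 2 * Real.sqrt (s + 1 - 2 * M ^ 2) :=
      mul_le_mul_of_nonneg_left (Real.sqrt_le_sqrt hfg) (le_of_lt h2)
    exact one_div_le_one_div_of_le (mul_pos h2 hsg) hle
end

section
/- Let c>0, K ≥ 0 and define for z ∈ ℝ the function φ(z) = (1/c²)·(K²+1)(z−K²−1)/(z² − 2(K²+1)z + 2K²+1). Then φ is monotone decreasing on the interval [√(1+4(K²+1)(K+ε₀)²), 2K²+3) for any ε₀ > 0 with K+ε₀ < √(K²+2). -/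
/-- The function `φ(z) = (1/c²)(K²+1)(z−K²−1)/(z²−2(K²+1)z+2K²+1)` is monotone
decreasing on `[√(1+4(K²+1)(K+ε₀)²), 2K²+3)`. -/
theorem stmt_10 (c K ε₀ : ℝ) (hc : 0 < c) (hK : 0 ≤ K) (hε : 0 < ε₀)
    (h : K + ε₀ < Real.sqrt (K ^ 2 + 2)) :
    AntitoneOn (fun z : ℝ =>
        (1 / c ^ 2) * ((K ^ 2 + 1) * (z - K ^ 2 - 1)
          / (z ^ 2 - 2 * (K ^ 2 + 1) * z + 2 * K ^ 2 + 1)))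
      (Set.Ico (Real.sqrt (1 + 4 * (K ^ 2 + 1) * (K + ε₀) ^ 2)) (2 * K ^ 2 + 3)) := by
  intro x hx y hy hxy
  simp only [Set.mem_Ico] at hx hy
  have hs : (2 * K ^ 2 + 1 : ℝ) < Real.sqrt (1 + 4 * (K ^ 2 + 1) * (K + ε₀) ^ 2) := by
    rw [show (2 * K ^ 2 + 1 : ℝ) = Real.sqrt ((2 * K ^ 2 + 1) ^ 2) from
      (Real.sqrt_sq (by positivity)).symm]
    apply Real.sqrt_lt_sqrt (by positivity)
    nlinarith [mul_pos (show (0:ℝ) < K ^ 2 + 1 by positivity)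
      (show (0:ℝ) < 2 * K * ε₀ + ε₀ ^ 2 by nlinarith [mul_nonneg hK hε.le])]
  have hx1 : 2 * K ^ 2 + 1 < x := lt_of_lt_of_le hs hx.1
  have hy1 : 2 * K ^ 2 + 1 < y := lt_of_lt_of_le hs hy.1
  have hDx : 0 < x ^ 2 - 2 * (K ^ 2 + 1) * x + 2 * K ^ 2 + 1 := by
    nlinarith [mul_pos (by nlinarith : (0:ℝ) < x - 1) (by nlinarith : (0:ℝ) < x - (2 * K ^ 2 + 1))]
  have hDy : 0 < y ^ 2 - 2 * (K ^ 2 + 1) * y + 2 * K ^ 2 + 1 := by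
    nlinarith [mul_pos (by nlinarith : (0:ℝ) < y - 1) (by nlinarith : (0:ℝ) < y - (2 * K ^ 2 + 1))]
  have hprod : (K ^ 2) ^ 2 ≤ (x - K ^ 2 - 1) * (y - K ^ 2 - 1) := by
    nlinarith [mul_le_mul (le_of_lt (by nlinarith : (K:ℝ) ^ 2 < x - K ^ 2 - 1))
      (le_of_lt (by nlinarith : (K:ℝ) ^ 2 < y - K ^ 2 - 1)) (sq_nonneg K)
      (by nlinarith : (0:ℝ) ≤ x - K ^ 2 - 1)]
  have key : (K ^ 2 + 1) * (y - K ^ 2 - 1) / (y ^ 2 - 2 * (K ^ 2 + 1) * y + 2 * K ^ 2 + 1)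
      ≤ (K ^ 2 + 1) * (x - K ^ 2 - 1) / (x ^ 2 - 2 * (K ^ 2 + 1) * x + 2 * K ^ 2 + 1) := by
    rw [div_le_div_iff₀ hDy hDx]
    have huv : (0:ℝ) ≤ (x - K ^ 2 - 1) * (y - K ^ 2 - 1) + (K ^ 2) ^ 2 := by
      nlinarith [hprod, sq_nonneg (K ^ 2)]
    nlinarith [mul_nonneg (mul_nonneg (show (0:ℝ) ≤ K ^ 2 + 1 by positivity)
      (sub_nonneg.mpr hxy)) huv]
  exact mul_le_mul_of_nonneg_left key (by positivity)
end

section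
/- Let c>0, K ≥ 0 and ε₀ > 0 with K+ε₀ ≤ √(K²+2)−ε₀. For M ∈ [K+ε₀, √(K²+2)−ε₀], write z = √(1+4(K²+1)M²) and define Q(M) = (K²+1)(z−K²−1)/(c²(z² − 2(K²+1)z + 2K²+1)). Then (K²+2)/(4c²) < Q(M) ≤ C₂²/c², where C₂² = c²·Q evaluated at M = K+ε₀. -/
set_option maxHeartbeats 1000000


/-- Uniform bounds `(K²+2)/(4c²) < Q(M) ≤ Q(K+ε₀)` over the Mach window, where
`Q(M) = (K²+1)(z−K²−1)/(c²(z²−2(K²+1)z+2K²+1))` with `z = √(1+4(K²+1)M²)`. -/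
theorem stmt_11 (c K ε₀ M : ℝ) (hc : 0 < c) (hK : 0 ≤ K) (hε : 0 < ε₀)
    (hwin : K + ε₀ ≤ Real.sqrt (K ^ 2 + 2) - ε₀)
    (hM1 : K + ε₀ ≤ M) (hM2 : M ≤ Real.sqrt (K ^ 2 + 2) - ε₀)
    (Q : ℝ → ℝ)
    (hQ : ∀ N : ℝ, Q N = (K ^ 2 + 1) * (Real.sqrt (1 + 4 * (K ^ 2 + 1) * N ^ 2) - K ^ 2 - 1)
        / (c ^ 2 * ((Real.sqrt (1 + 4 * (K ^ 2 + 1) * N ^ 2)) ^ 2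
            - 2 * (K ^ 2 + 1) * Real.sqrt (1 + 4 * (K ^ 2 + 1) * N ^ 2)
            + 2 * K ^ 2 + 1))) :
    (K ^ 2 + 2) / (4 * c ^ 2) < Q M ∧ Q M ≤ Q (K + ε₀) := by
  have hc2 : (0:ℝ) < c ^ 2 := by positivity
  set a : ℝ := K ^ 2 + 1 with ha
  have ha1 : 1 ≤ a := by nlinarith [sq_nonneg K]
  have hMK : K < M := by linarith
  have hM0 : (0:ℝ) ≤ M := by linarith
  have hsq2 : Real.sqrt (K ^ 2 + 2) ^ 2 = K ^ 2 + 2 :=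
    Real.sq_sqrt (by positivity)
  have hsqnn : 0 ≤ Real.sqrt (K ^ 2 + 2) := Real.sqrt_nonneg _
  have hMsq : M ^ 2 < a + 1 := by
    have h1 : M < Real.sqrt (K ^ 2 + 2) := by linarith
    nlinarith
  have hM1sq : (K + ε₀) ^ 2 < a + 1 := by
    have h1 : K + ε₀ < Real.sqrt (K ^ 2 + 2) := by linarith
    nlinarith
  set s : ℝ := Real.sqrt (1 + 4 * a * M ^ 2) with hs
  set s1 : ℝ := Real.sqrt (1 + 4 * a * (K + ε₀) ^ 2) with hs1
  clear_value a s s1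
  have hQM : Q M = a * (s - a) / (c ^ 2 * (s ^ 2 - 2 * a * s + 2 * a - 1)) := by
    rw [hQ, ← hs, ha]; ring
  have hQ1 : Q (K + ε₀) = a * (s1 - a) / (c ^ 2 * (s1 ^ 2 - 2 * a * s1 + 2 * a - 1)) := by
    rw [hQ, ← hs1, ha]; ring
  clear hQ
  have hs0 : 0 ≤ s := by rw [hs]; exact Real.sqrt_nonneg _
  have hs10 : 0 ≤ s1 := by rw [hs1]; exact Real.sqrt_nonneg _
  -- z bounds
  have hslo : 2 * a - 1 < s := by
    rw [hs, Real.lt_sqrt (by linarith)]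
    nlinarith [mul_pos (show (0:ℝ) < a by linarith)
      (show (0:ℝ) < M ^ 2 - K ^ 2 by nlinarith)]
  have hshi : s < 2 * a + 1 := by
    rw [hs, Real.sqrt_lt' (by linarith)]
    nlinarith [mul_pos (show (0:ℝ) < a by linarith)
      (show (0:ℝ) < a + 1 - M ^ 2 by linarith)]
  have hs1lo : 2 * a - 1 < s1 := by
    rw [hs1, Real.lt_sqrt (by linarith)]
    nlinarith [mul_pos (show (0:ℝ) < a by linarith)
      (show (0:ℝ) < (K + ε₀) ^ 2 - K ^ 2 by nlinarith)]
  have hs1hi : s1 < 2 * a + 1 := by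
    rw [hs1, Real.sqrt_lt' (by linarith)]
    nlinarith [mul_pos (show (0:ℝ) < a by linarith)
      (show (0:ℝ) < a + 1 - (K + ε₀) ^ 2 by linarith)]
  have hs1s : s1 ≤ s := by
    rw [hs, hs1]
    apply Real.sqrt_le_sqrt
    nlinarith [mul_nonneg (mul_nonneg (show (0:ℝ) ≤ 4 * a by linarith)
      (sub_nonneg.2 hM1)) (show (0:ℝ) ≤ M + (K + ε₀) by linarith)]
  -- denominators positive
  have hden : 0 < s ^ 2 - 2 * a * s + 2 * a - 1 := by
    nlinarith [mul_pos (show (0:ℝ) < s - 1 by linarith)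
      (show (0:ℝ) < s - (2 * a - 1) by linarith)]
  have hden1 : 0 < s1 ^ 2 - 2 * a * s1 + 2 * a - 1 := by
    nlinarith [mul_pos (show (0:ℝ) < s1 - 1 by linarith)
      (show (0:ℝ) < s1 - (2 * a - 1) by linarith)]
  have hKa : K ^ 2 + 2 = a + 1 := by rw [ha]; ring
  constructor
  · rw [hQM, hKa, div_lt_div_iff₀ (by positivity) (by positivity)]
    have h1 : 0 < 2 * a + 1 - s := by linarith
    have h2 : 0 < (a + 1) * s - 3 * a + 1 := by nlinarith
    nlinarith [mul_pos hc2 (mul_pos h1 h2)]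
  · rw [hQM, hQ1, div_le_div_iff₀ (by positivity) (by positivity)]
    have hbr : 0 ≤ (s1 - a) * (s - a) + (a - 1) ^ 2 := by
      have h1 : 0 ≤ s1 - a := by linarith
      have h2 : 0 ≤ s - a := by linarith
      nlinarith [mul_nonneg h1 h2, sq_nonneg (a - 1)]
    nlinarith [mul_nonneg (mul_nonneg (mul_nonneg hc2.le (show (0:ℝ) ≤ a by linarith))
      (sub_nonneg.2 hs1s)) hbr]
end

section
/- Let τ ∈ ℂ with Re τ > 0, η ∈ ℝ\{0}, and let μ± be square roots with positive real part of ((τ±ivη)²+(G11²+G12²)η²)/c² + η². Then the symbol Σ(τ,η) = τ² − v²η² − 2ivητ(μ⁺−μ⁻)/(μ⁺+μ⁻) + (G11²+G12²)η² equals c²(μ⁺μ⁻ − η²). -/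
/-- The symbol `Σ(τ,η) = τ² − v²η² − 2ivητ(μ⁺−μ⁻)/(μ⁺+μ⁻) + (G11²+G12²)η²`
equals `c²(μ⁺μ⁻ − η²)`. -/
theorem stmt_15 (c v G11 G12 η : ℝ) (hc : 0 < c) (hη : η ≠ 0)
    (τ : ℂ) (hτ : 0 < τ.re) (μp μm : ℂ)
    (hμp : μp ^ 2 = ((τ + Complex.I * (v : ℂ) * (η : ℂ)) ^ 2
        + ((G11 ^ 2 + G12 ^ 2 : ℝ) : ℂ) * (η : ℂ) ^ 2) / (c : ℂ) ^ 2 + (η : ℂ) ^ 2)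
    (hμpre : 0 < μp.re)
    (hμm : μm ^ 2 = ((τ - Complex.I * (v : ℂ) * (η : ℂ)) ^ 2
        + ((G11 ^ 2 + G12 ^ 2 : ℝ) : ℂ) * (η : ℂ) ^ 2) / (c : ℂ) ^ 2 + (η : ℂ) ^ 2)
    (hμmre : 0 < μm.re) :
    τ ^ 2 - (v : ℂ) ^ 2 * (η : ℂ) ^ 2
        - 2 * Complex.I * (v : ℂ) * (η : ℂ) * τ * ((μp - μm) / (μp + μm))
        + ((G11 ^ 2 + G12 ^ 2 : ℝ) : ℂ) * (η : ℂ) ^ 2 =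
      (c : ℂ) ^ 2 * (μp * μm - (η : ℂ) ^ 2) := by

  have hc0 : (c:ℂ) ≠ 0 := by exact_mod_cast hc.ne'
  have hsum : μp + μm ≠ 0 := by
    intro h
    have h2 : (μp + μm).re = 0 := by rw [h]; simp
    simp [Complex.add_re] at h2
    linarith
  have hp : (c:ℂ)^2 * μp^2 = (τ + Complex.I * (v:ℂ) * (η:ℂ))^2
      + ((G11 ^ 2 + G12 ^ 2 : ℝ) : ℂ) * (η:ℂ)^2 + (c:ℂ)^2 * (η:ℂ)^2 := by
    rw [hμp]; field_simp
  have hm : (c:ℂ)^2 * μm^2 = (τ - Complex.I * (v:ℂ) * (η:ℂ))^2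
      + ((G11 ^ 2 + G12 ^ 2 : ℝ) : ℂ) * (η:ℂ)^2 + (c:ℂ)^2 * (η:ℂ)^2 := by
    rw [hμm]; field_simp
  have key : (τ ^ 2 - (v:ℂ)^2 * (η:ℂ)^2 + ((G11 ^ 2 + G12 ^ 2 : ℝ) : ℂ) * (η:ℂ)^2)
        * (μp + μm) - 2 * Complex.I * (v:ℂ) * (η:ℂ) * τ * (μp - μm)
      = (c:ℂ)^2 * (μp * μm - (η:ℂ)^2) * (μp + μm) := by
    linear_combination (-μm) * hp + (-μp) * hm + (-(v:ℂ)^2*(η:ℂ)^2*(μp+μm)) * Complex.I_sq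
  push_cast at key ⊢
  field_simp [hsum]
  linear_combination key
end

section
/- Suppose a smooth solution of the 2D linearized compressible elastic system ∂ₜh + v̇₁∂₁h + div w = 0, ∂ₜw + v̇₁∂₁w + c²∇h = Σⱼ Ġ₁ⱼ∂₁Eⱼ, ∂ₜEⱼ + v̇₁∂₁Eⱼ = Ġ₁ⱼ∂₁w on each half-plane has the normal mode form h = e^{τt}m, w = e^{τt}W, Eⱼ = e^{τt}Fⱼ, f = e^{τt}g with Re τ > 0, where m satisfies (τ + iv̇₁η)²m̂ + c²η²m̂ − c²∂₂²m̂ + (Ġ₁₁² + Ġ₁₂²)η²m̂ = 0 on each half-line with [m̂] = 0 and [c²∂₂m̂] = −4iv̇₁⁺τηĝ at x₂ = 0, and m̂ decays as |x₂| → ∞. Then m̂(η,x₂) = (4iv̇₁⁺τηĝ/(c²(μ⁺+μ⁻)))·e^{−μ⁺x₂} for x₂ ≥ 0 and m̂(η,x₂) = (4iv̇₁⁺τηĝ/(c²(μ⁺+μ⁻)))·e^{μ⁻x₂} for x₂ < 0, where μ± are the square roots with positive real part of ((τ ± iv̇₁⁺η)² + (Ġ₁₁²+Ġ₁₂²)η²)/c²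 + η². -/
open Filter Set

private lemma hasDerivAt_cexp_mul (a : ℂ) (x : ℝ) :
    HasDerivAt (fun t : ℝ => Complex.exp (a * t)) (a * Complex.exp (a * x)) x := by
  have h1 : HasDerivAt (fun t : ℝ => (a * t : ℂ)) a x := by
    simpa using (Complex.ofRealCLM.hasDerivAt (x := x)).const_mul a
  exact ((Complex.hasDerivAt_exp (a * x)).comp x h1).congr_deriv (mul_comm _ _)

private lemma norm_cexp_mul (a : ℂ) (x : ℝ) :
    ‖Complex.exp (a * x)‖ = Real.exp (a.re * x) := by
  rw [Complex.norm_exp]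
  congr 1
  simp [Complex.mul_re]

private lemma const_on_Ici (f : ℝ → ℂ) (hf : ∀ x : ℝ, 0 ≤ x → HasDerivAt f 0 x) :
    ∀ x : ℝ, 0 ≤ x → f x = f 0 := by
  intro x hx
  have hcont : ContinuousOn f (Icc 0 x) :=
    fun y hy => ((hf y hy.1).continuousAt).continuousWithinAt
  exact constant_of_has_deriv_right_zero hcont
    (fun y hy => (hf y hy.1).hasDerivWithinAt) x ⟨hx, le_refl x⟩

/-- Key ODE uniqueness lemma on the half-line. -/
private lemma halfline (M : ℝ → ℂ) (hM : ContDiff ℝ (⊤ : ℕ∞) M) (μ : ℂ) (hμ : 0 < μ.re)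
    (hODE : ∀ x : ℝ, 0 ≤ x → deriv (deriv M) x = μ ^ 2 * M x)
    (hdecay : Tendsto M atTop (nhds 0)) :
    deriv M 0 = -μ * M 0 ∧ ∀ x : ℝ, 0 ≤ x → M x = M 0 * Complex.exp (-μ * x) := by
  have hμ0 : μ ≠ 0 := fun h => by simp [h] at hμ
  have hMinf : ContDiff ℝ ((⊤ : ℕ∞) : WithTop ℕ∞) M := hM.of_le (by simp)
  obtain ⟨hMd, hM'⟩ := contDiff_infty_iff_deriv.mp hMinf
  have hM'd : Differentiable ℝ (deriv M) := hM'.differentiable (by simp)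
  set u0 := deriv M 0 + μ * M 0 with hu0
  -- Step 1: deriv M x + μ M x = u0 exp(μ x) on [0,∞)
  have key1 : ∀ x : ℝ, 0 ≤ x →
      deriv M x + μ * M x = u0 * Complex.exp (μ * x) := by
    have hconst := const_on_Ici
      (fun x => (deriv M x + μ * M x) * Complex.exp (-μ * x)) ?_
    · intro x hx
      have h := hconst x hx
      have he : Complex.exp (-μ * x) * Complex.exp (μ * x) = 1 := by
        rw [← Complex.exp_add]; ring_nf; exact Complex.exp_zero
      simp only [Complex.ofReal_zero, mul_zero, Complex.exp_zero, mul_one] at h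
      calc deriv M x + μ * M x
          = ((deriv M x + μ * M x) * Complex.exp (-μ * x)) * Complex.exp (μ * x) := by
            rw [mul_assoc, he, mul_one]
        _ = u0 * Complex.exp (μ * x) := by rw [h]
    · intro x hx
      have h1 : HasDerivAt (fun x => deriv M x + μ * M x)
          (deriv (deriv M) x + μ * deriv M x) x :=
        ((hM'd x).hasDerivAt).add (((hMd x).hasDerivAt).const_mul μ)
      have h3 := h1.mul (hasDerivAt_cexp_mul (-μ) x)
      refine h3.congr_deriv ?_
      rw [hODE x hx]; ring
  -- Step 2
  have key2 : ∀ x : ℝ, 0 ≤ x →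
      M x * Complex.exp (μ * x) - u0 / (2 * μ) * Complex.exp (2 * μ * x)
        = M 0 - u0 / (2 * μ) := by
    have hconst := const_on_Ici
      (fun x => M x * Complex.exp (μ * x) - u0 / (2 * μ) * Complex.exp (2 * μ * x)) ?_
    · intro x hx
      have h := hconst x hx
      simpa using h
    · intro x hx
      have h1 := ((hMd x).hasDerivAt).mul (hasDerivAt_cexp_mul μ x)
      have h2 := (hasDerivAt_cexp_mul (2 * μ) x).const_mul (u0 / (2 * μ))
      have h3 := h1.sub h2
      refine h3.congr_deriv ?_
      have he : Complex.exp (μ * x) * Complex.exp (μ * x) = Complex.exp (2 * μ * x) := by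
        rw [← Complex.exp_add]; ring_nf
      have hk := key1 x hx
      have heq : deriv M x * Complex.exp (μ * x) + M x * (μ * Complex.exp (μ * x))
          = u0 * Complex.exp (2 * μ * x) := by
        rw [← he]
        calc deriv M x * Complex.exp (μ * x) + M x * (μ * Complex.exp (μ * x))
            = (deriv M x + μ * M x) * Complex.exp (μ * x) := by ring
          _ = u0 * Complex.exp (μ * x) * Complex.exp (μ * x) := by rw [hk]
          _ = _ := by ring
      rw [heq]
      field_simp
      ring
  -- Step 3: u0 = 0
  have hexp0 : Tendsto (fun x : ℝ => Complex.exp (-μ * x)) atTop (nhds 0) := by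
    rw [tendsto_zero_iff_norm_tendsto_zero]
    have hn : ∀ x : ℝ, ‖Complex.exp (-μ * x)‖ = Real.exp (-(μ.re * x)) := by
      intro x
      rw [norm_cexp_mul]
      congr 1
      simp
    simp only [hn]
    exact Real.tendsto_exp_neg_atTop_nhds_zero.comp
      (Tendsto.const_mul_atTop hμ tendsto_id)
  have hu0zero : u0 = 0 := by
    by_contra hne
    set C := u0 / (2 * μ) with hC
    have hCne : C ≠ 0 := by
      rw [hC, div_ne_zero_iff]
      exact ⟨hne, by simp [hμ0]⟩
    have hform : ∀ x : ℝ, 0 ≤ x →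
        C * Complex.exp (μ * x) = M x - (M 0 - C) * Complex.exp (-μ * x) := by
      intro x hx
      have h := key2 x hx
      have he : Complex.exp (2 * μ * x) = Complex.exp (μ * x) * Complex.exp (μ * x) := by
        rw [← Complex.exp_add]; ring_nf
      have he2 : Complex.exp (-μ * x) * Complex.exp (μ * x) = 1 := by
        rw [← Complex.exp_add]; ring_nf; exact Complex.exp_zero
      have hexpne : Complex.exp (μ * x) ≠ 0 := Complex.exp_ne_zero _
      have h2 : M x * Complex.exp (μ * x) = M 0 - C + C * Complex.exp (2 * μ * x) := by
        linear_combination h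
      rw [he] at h2
      have h3 : C * Complex.exp (μ * x) * Complex.exp (μ * x)
          = (M x - (M 0 - C) * Complex.exp (-μ * x)) * Complex.exp (μ * x) := by
        calc C * Complex.exp (μ * x) * Complex.exp (μ * x)
            = M x * Complex.exp (μ * x) - (M 0 - C) := by linear_combination -h2
          _ = M x * Complex.exp (μ * x)
              - (M 0 - C) * (Complex.exp (-μ * x) * Complex.exp (μ * x)) := by
              rw [he2]; ring
          _ = _ := by ring
      exact mul_right_cancel₀ hexpne h3
    have hT : Tendsto (fun x : ℝ => C * Complex.exp (μ * x)) atTop (nhds 0) := by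
      have h1 : Tendsto (fun x : ℝ => M x - (M 0 - C) * Complex.exp (-μ * x))
          atTop (nhds 0) := by
        have := hdecay.sub ((hexp0.const_mul (M 0 - C)))
        simpa using this
      exact h1.congr' (by
        filter_upwards [eventually_ge_atTop (0 : ℝ)] with x hx
        exact (hform x hx).symm)
    have hev := (tendsto_zero_iff_norm_tendsto_zero.mp hT).eventually (gt_mem_nhds (norm_pos_iff.mpr hCne))
    obtain ⟨x, hx0, hxlt⟩ := (hev.and (eventually_ge_atTop (0 : ℝ))).exists
    have hnorm : ‖C * Complex.exp (μ * x)‖ = ‖C‖ * Real.exp (μ.re * x) := by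
      rw [norm_mul, norm_cexp_mul]
    rw [hnorm] at hx0
    have : ‖C‖ ≤ ‖C‖ * Real.exp (μ.re * x) := by
      nlinarith [Real.one_le_exp (by positivity : (0:ℝ) ≤ μ.re * x), norm_pos_iff.mpr hCne]
    linarith
  have hder : deriv M 0 = -μ * M 0 := by
    have := hu0zero
    rw [hu0] at this
    linear_combination this
  refine ⟨hder, fun x hx => ?_⟩
  have h := key2 x hx
  rw [hu0zero] at h
  simp only [zero_div, zero_mul, sub_zero] at h
  have he2 : Complex.exp (μ * x) * Complex.exp (-μ * x) = 1 := by
    rw [← Complex.exp_add]; ring_nf; exact Complex.exp_zero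
  calc M x = M x * (Complex.exp (μ * x) * Complex.exp (-μ * x)) := by rw [he2, mul_one]
    _ = (M x * Complex.exp (μ * x)) * Complex.exp (-μ * x) := by ring
    _ = M 0 * Complex.exp (-μ * x) := by rw [h]

/-- Uniqueness of the normal-mode profile: if `m̂` solves the second-order ODE on each
half-line with the jump conditions `[m̂]=0`, `[c²∂₂m̂] = −4iv̇₁⁺τηgHat` at `x₂ = 0` and decays
at infinity, then it is given by the explicit exponential formula with decay rates `μ±`,
the square roots with positive real part of `((τ ± ivη)² + (G11²+G12²)η²)/c² + η²`. -/
theorem stmt_19 (c v G11 G12 η : ℝ) (hc : 0 < c)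
    (τ gHat : ℂ) (hτ : 0 < τ.re) (μp μm : ℂ)
    (hμp : μp ^ 2 = ((τ + Complex.I * (v : ℂ) * (η : ℂ)) ^ 2
        + ((G11 ^ 2 + G12 ^ 2 : ℝ) : ℂ) * (η : ℂ) ^ 2) / (c : ℂ) ^ 2 + (η : ℂ) ^ 2)
    (hμpre : 0 < μp.re)
    (hμm : μm ^ 2 = ((τ - Complex.I * (v : ℂ) * (η : ℂ)) ^ 2
        + ((G11 ^ 2 + G12 ^ 2 : ℝ) : ℂ) * (η : ℂ) ^ 2) / (c : ℂ) ^ 2 + (η : ℂ) ^ 2)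
    (hμmre : 0 < μm.re)
    (Mp Mm : ℝ → ℂ)
    (hMp : ContDiff ℝ (⊤ : ℕ∞) Mp) (hMm : ContDiff ℝ (⊤ : ℕ∞) Mm)
    -- the ODE for m̂ in the upper half-plane (background velocity `+v`)
    (hODEp : ∀ x : ℝ, 0 ≤ x →
      (τ + Complex.I * (v : ℂ) * (η : ℂ)) ^ 2 * Mp x
        + (c : ℂ) ^ 2 * (η : ℂ) ^ 2 * Mp x
        - (c : ℂ) ^ 2 * deriv (deriv Mp) x
        + ((G11 ^ 2 + G12 ^ 2 : ℝ) : ℂ) * (η : ℂ) ^ 2 * Mp x = 0)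
    -- the ODE for m̂ in the lower half-plane (background velocity `−v`)
    (hODEm : ∀ x : ℝ, x ≤ 0 →
      (τ - Complex.I * (v : ℂ) * (η : ℂ)) ^ 2 * Mm x
        + (c : ℂ) ^ 2 * (η : ℂ) ^ 2 * Mm x
        - (c : ℂ) ^ 2 * deriv (deriv Mm) x
        + ((G11 ^ 2 + G12 ^ 2 : ℝ) : ℂ) * (η : ℂ) ^ 2 * Mm x = 0)
    -- jump conditions at `x₂ = 0`
    (hjump0 : Mp 0 = Mm 0)
    (hjump1 : (c : ℂ) ^ 2 * (deriv Mp 0 - deriv Mm 0)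
      = -(4 * Complex.I * (v : ℂ) * τ * (η : ℂ) * gHat))
    -- decay at infinity
    (hdecayp : Filter.Tendsto Mp Filter.atTop (nhds 0))
    (hdecaym : Filter.Tendsto Mm Filter.atBot (nhds 0)) :
    (∀ x : ℝ, 0 ≤ x →
      Mp x = 4 * Complex.I * (v : ℂ) * τ * (η : ℂ) * gHat / ((c : ℂ) ^ 2 * (μp + μm))
        * Complex.exp (-μp * (x : ℂ))) ∧
    (∀ x : ℝ, x < 0 →
      Mm x = 4 * Complex.I * (v : ℂ) * τ * (η : ℂ) * gHat / ((c : ℂ) ^ 2 * (μp + μm))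
        * Complex.exp (μm * (x : ℂ))) := by
  have hc0 : (c : ℂ) ≠ 0 := Complex.ofReal_ne_zero.mpr hc.ne'
  have hc2 : (c : ℂ) ^ 2 ≠ 0 := pow_ne_zero _ hc0
  -- rewritten ODEs
  have hODEp' : ∀ x : ℝ, 0 ≤ x → deriv (deriv Mp) x = μp ^ 2 * Mp x := by
    intro x hx
    have h := hODEp x hx
    apply mul_left_cancel₀ hc2
    rw [hμp]
    field_simp
    push_cast at h ⊢
    linear_combination -h
  have hODEm' : ∀ x : ℝ, x ≤ 0 → deriv (deriv Mm) x = μm ^ 2 * Mm x := by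
    intro x hx
    have h := hODEm x hx
    apply mul_left_cancel₀ hc2
    rw [hμm]
    field_simp
    push_cast at h ⊢
    linear_combination -h
  -- upper half-plane
  obtain ⟨hderp, hvalp⟩ := halfline Mp hMp μp hμpre hODEp' hdecayp
  -- lower half-plane via reflection
  have hMminf : ContDiff ℝ ((⊤ : ℕ∞) : WithTop ℕ∞) Mm := hMm.of_le (by simp)
  obtain ⟨hMmd, hMm'⟩ := contDiff_infty_iff_deriv.mp hMminf
  have hMm'd : Differentiable ℝ (deriv Mm) := hMm'.differentiable (by simp)
  set N : ℝ → ℂ := fun x => Mm (-x) with hN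
  have hNcd : ContDiff ℝ (⊤ : ℕ∞) N := hMm.comp (contDiff_id.neg)
  have hnegd : ∀ x : ℝ, HasDerivAt (fun y : ℝ => -y) (-1) x := by
    intro x
    exact (hasDerivAt_id x).neg
  have hNd : ∀ x : ℝ, HasDerivAt N (-deriv Mm (-x)) x := by
    intro x
    have := ((hMmd (-x)).hasDerivAt).scomp x (hnegd x)
    exact this.congr_deriv (by simp)
  have hderivN : deriv N = fun x => -deriv Mm (-x) := funext fun x => (hNd x).deriv
  have hN2 : ∀ x : ℝ, deriv (deriv N) x = deriv (deriv Mm) (-x) := by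
    intro x
    rw [hderivN]
    have h1 := (((hMm'd (-x)).hasDerivAt).scomp x (hnegd x)).neg
    have h2 : HasDerivAt (fun x : ℝ => -deriv Mm (-x)) (deriv (deriv Mm) (-x)) x := by
      exact h1.congr_deriv (by simp)
    exact h2.deriv
  have hNODE : ∀ x : ℝ, 0 ≤ x → deriv (deriv N) x = μm ^ 2 * N x := by
    intro x hx
    rw [hN2 x]
    exact hODEm' (-x) (neg_nonpos.mpr hx)
  have hNdecay : Tendsto N atTop (nhds 0) :=
    hdecaym.comp Filter.tendsto_neg_atTop_atBot
  obtain ⟨hderN, hvalN⟩ := halfline N hNcd μm hμmre hNODE hNdecay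
  have hN0 : N 0 = Mm 0 := by simp [hN]
  have hderm : deriv Mm 0 = μm * Mm 0 := by
    rw [hderivN] at hderN
    simp only [neg_zero, hN0] at hderN
    linear_combination -hderN
  -- solve for the amplitude
  have hsum : μp + μm ≠ 0 := by
    intro h
    have := congrArg Complex.re h
    simp [Complex.add_re] at this
    linarith
  have hA : Mp 0 = 4 * Complex.I * (v : ℂ) * τ * (η : ℂ) * gHat
      / ((c : ℂ) ^ 2 * (μp + μm)) := by
    rw [hderp, hjump0, hderm, ← hjump0] at hjump1
    field_simp
    linear_combination -hjump1
  constructor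
  · intro x hx
    rw [hvalp x hx, hA]
  · intro x hx
    have hval := hvalN (-x) (by linarith)
    have hNx : N (-x) = Mm x := by simp [hN]
    rw [hNx, hN0] at hval
    rw [hval, hjump0.symm, hA]
    congr 1
    push_cast
    ring_nf
end
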